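/- Let G_n = a_1(n) α_1^n + ⋯ + a_t(n) α_t^n be a non-degenerate linear recurrence sequence of polynomials G_n ∈ ℂ[x], where α_1, …, α_t ∈ ℂ[x] are nonzero polynomials such that α_i/α_j ∉ ℂ for i ≠ j, and a_1, …, a_t are nonzero polynomials with coefficients in ℂ(x) (or a finite extension). Then there exists a constant C, independent of n, such that for all sufficiently large n: deg G_n ≥ n · max_{j=1,…,t} deg α_j − C. -/

import Mathlib

/-!
After clearing denominators, `d · G n = H n := ∑ j, B_j(n) α_j ^ n`, where each `B_j ∈ K[x][n]`
(modelled as `K[X][X]`, the outer variable being `n`). Induct on the number of terms. Let `α₀` have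
minimal degree and `f = B₀(n) α₀ ^ n`. The Wronskian `W(f, H)` kills the `α₀`-term, and after
dividing by `α₀ ^ (n - 1)` it is again such a sum over the remaining `α_j`, with exponent `n - 1`;
its coefficients are nonzero because non-proportional polynomials have a nonzero Wronskian. As
`deg W(f, H) ≤ deg f + deg H` and `deg B₀(n)` is bounded in `n`, the lower bound for the shorter sum
passes to `H`, and dropping an `α` of minimal degree does not change the maximal degree.
-/

open Polynomial Filter

theorem Finset.sup_erase_of_le {ι α : Type*} [DecidableEq ι] [SemilatticeSup α] [OrderBot α]
    {s : Finset ι} {f : ι → α} {i j : ι} (hi : i ∈ s) (hj : j ∈ s.erase i) (h : f i ≤ f j) :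
    (s.erase i).sup f = s.sup f := by
  conv_rhs => rw [← Finset.insert_erase hi, Finset.sup_insert]
  exact (sup_eq_right.mpr (h.trans (Finset.le_sup hj))).symm

theorem Differential.natDegree_mapCoeffs_le {A : Type*} [CommRing A] [Differential A] (p : A[X]) :
    (mapCoeffs p).natDegree ≤ p.natDegree :=
  natDegree_le_iff_coeff_eq_zero.mpr fun _ hk => by
    rw [coeff_mapCoeffs, coeff_eq_zero_of_natDegree_lt hk, Derivation.map_zero]

theorem IsLocalization.exists_map_eq_smul {R S ι : Type*} [CommRing R] [CommRing S] [Algebra R S]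
    (M : Submonoid R) [IsLocalization M S] [Fintype ι] (p : ι → S[X]) :
    ∃ b : M, ∀ i, ∃ q : R[X], q.map (algebraMap R S) = (b : R) • p i := by
  obtain ⟨b, hb⟩ := exist_integer_multiples M (Finset.univ.sigma fun i => (p i).support)
    fun x => (p x.1).coeff x.2
  refine ⟨b, fun i => (mem_lifts _).mp <| (lifts_iff_coeff_lifts _).mpr fun k => ?_⟩
  rw [coeff_smul]
  by_cases hk : k ∈ (p i).support
  · exact hb ⟨i, k⟩ (Finset.mem_sigma.mpr ⟨Finset.mem_univ i, hk⟩)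
  · rw [notMem_support_iff.mp hk, smul_zero]
    exact ⟨0, map_zero _⟩

namespace Polynomial

section Semiring

variable {R : Type*} [Semiring R]

noncomputable def polyPowerSum {ι : Type*} (S : Finset ι) (B : ι → R[X][X]) (α : ι → R[X])
    (n : ℕ) : R[X] :=
  ∑ j ∈ S, (B j).eval (n : R[X]) * α j ^ n

theorem natDegree_eval_natCast_le (B : R[X][X]) (n : ℕ) :
    (B.eval (n : R[X])).natDegree ≤ B.support.sup fun k => (B.coeff k).natDegree := by
  rw [eval_eq_sum, Polynomial.sum]
  refine natDegree_sum_le_of_forall_le _ _ fun k hk => ?_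
  rw [← Nat.cast_pow]
  refine natDegree_mul_le.trans ?_
  rw [natDegree_natCast, add_zero]
  exact Finset.le_sup (f := fun k => (B.coeff k).natDegree) hk

theorem le_natDegree_mul_pow [NoZeroDivisors R] {b : R[X]} (hb : b ≠ 0) (a : R[X]) (n : ℕ) :
    n * a.natDegree ≤ (b * a ^ n).natDegree := by
  rcases eq_or_ne a 0 with rfl | ha
  · simp
  rw [natDegree_mul hb (pow_ne_zero n ha), natDegree_pow]
  exact Nat.le_add_left _ _

end Semiring

theorem eventually_eval_natCast_ne_zero {A : Type*} [CommRing A] [IsDomain A] [CharZero A]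
    {p : A[X]} (hp : p ≠ 0) : ∀ᶠ n : ℕ in atTop, p.eval (n : A) ≠ 0 := by
  rw [← Nat.cofinite_eq_atTop]
  exact ((finite_setOfPred_isRoot hp).preimage Nat.cast_injective.injOn).eventually_cofinite_notMem

section CommRing

variable {R : Type*} [CommRing R]

noncomputable abbrev derivativeDifferential : Differential R[X] :=
  ⟨(derivative' : Derivation R R[X] R[X]).restrictScalars ℤ⟩

attribute [local instance] derivativeDifferential

open Differential

theorem derivative_eval_natCast (B : R[X][X]) (n : ℕ) :
    derivative (B.eval (n : R[X])) = (mapCoeffs B).eval (n : R[X]) := by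
  have h := deriv_aeval_eq (n : R[X]) B
  simp only [coe_aeval_eq_eval, Derivation.map_natCast, mul_zero, add_zero] at h
  exact h

theorem natDegree_wronskian_le (a b : R[X]) :
    (wronskian a b).natDegree ≤ a.natDegree + b.natDegree := by
  by_cases hw : wronskian a b = 0
  · simp [hw]
  · exact (natDegree_wronskian_lt_add hw).le

theorem wronskian_mul_mul_left (g a b : R[X]) :
    wronskian (g * a) (g * b) = g ^ 2 * wronskian a b := by
  simp only [wronskian, derivative_mul]
  ring

noncomputable def termWronskian (a : R[X]) (A : R[X][X]) (b : R[X]) (B : R[X][X]) : R[X][X] :=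
  C (a * b) * (A * mapCoeffs B - mapCoeffs A * B) + C (wronskian a b) * (X * (A * B))

theorem wronskian_eval_mul_pow_succ (a b : R[X]) (A B : R[X][X]) (m : ℕ) :
    wronskian (A.eval ↑(m + 1) * a ^ (m + 1)) (B.eval ↑(m + 1) * b ^ (m + 1)) =
      (a * b) ^ m * (termWronskian a A b B).eval ↑(m + 1) := by
  simp only [wronskian, termWronskian, derivative_mul, derivative_pow_succ, derivative_eval_natCast,
    eval_add, eval_mul, eval_sub, eval_C, eval_X, map_add, map_one, map_natCast]
  push_cast
  ring

theorem wronskian_polyPowerSum_succ {ι : Type*} [DecidableEq ι] {S : Finset ι} {j₀ : ι}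
    (hj₀ : j₀ ∈ S) (B : ι → R[X][X]) (α : ι → R[X]) (m : ℕ) :
    wronskian ((B j₀).eval ↑(m + 1) * α j₀ ^ (m + 1)) (polyPowerSum S B α (m + 1)) =
      α j₀ ^ m * polyPowerSum (S.erase j₀)
        (fun j => taylor 1 (termWronskian (α j₀) (B j₀) (α j) (B j))) α m := by
  rw [polyPowerSum, ← wronskianBilin_apply, map_sum, ← Finset.add_sum_erase _ _ hj₀,
    wronskianBilin_apply, wronskian_self_eq_zero, zero_add, polyPowerSum, Finset.mul_sum]
  refine Finset.sum_congr rfl fun j _ => ?_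
  rw [wronskianBilin_apply, wronskian_eval_mul_pow_succ, taylor_eval, mul_pow]
  push_cast
  ring

variable [IsDomain R]

theorem termWronskian_ne_zero {a b : R[X]} {A B : R[X][X]} (hw : wronskian a b ≠ 0)
    (hA : A ≠ 0) (hB : B ≠ 0) : termWronskian a A b B ≠ 0 := by
  have hlow : (A * mapCoeffs B - mapCoeffs A * B).natDegree ≤ A.natDegree + B.natDegree :=
    (natDegree_sub_le _ _).trans <| max_le
      (natDegree_mul_le.trans (by gcongr; exact natDegree_mapCoeffs_le B))
      (natDegree_mul_le.trans (by gcongr; exact natDegree_mapCoeffs_le A))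
  intro h
  have htop := congrArg (coeff · (A.natDegree + B.natDegree + 1)) h
  simp only [termWronskian, coeff_add, coeff_C_mul, coeff_X_mul, coeff_mul_degree_add_degree,
    coeff_eq_zero_of_natDegree_lt (Nat.lt_succ_of_le hlow), mul_zero, zero_add, coeff_zero] at htop
  exact mul_ne_zero hw (mul_ne_zero (leadingCoeff_ne_zero.mpr hA) (leadingCoeff_ne_zero.mpr hB)) htop

theorem natDegree_le_of_pow_mul_eq_wronskian {a b H K : R[X]} {m : ℕ} (ha : a ≠ 0)
    (h : a ^ m * K = wronskian (b * a ^ (m + 1)) H) :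
    K.natDegree ≤ b.natDegree + a.natDegree + H.natDegree := by
  rcases eq_or_ne K 0 with rfl | hK
  · simp
  have hdeg := congrArg natDegree h
  rw [natDegree_mul (pow_ne_zero m ha) hK, natDegree_pow] at hdeg
  have hw := natDegree_wronskian_le (b * a ^ (m + 1)) H
  have hf : (b * a ^ (m + 1)).natDegree ≤ b.natDegree + (m + 1) * a.natDegree :=
    natDegree_mul_le.trans (by gcongr; exact natDegree_pow_le)
  linarith

end CommRing

section Field

variable {K : Type*} [Field K] [CharZero K]

theorem exists_eq_smul_of_wronskian_eq_zero {p q : K[X]} (hp : p ≠ 0) (hw : wronskian p q = 0) :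
    ∃ c : K, q = c • p := by
  classical
  rcases eq_or_ne q 0 with rfl | hq
  · exact ⟨0, by simp⟩
  have hg : gcd p q ≠ 0 := gcd_ne_zero_of_left hp
  have hcop : IsCoprime (p / gcd p q) (q / gcd p q) := isCoprime_div_gcd_div_gcd hq
  have hp₁ : p / gcd p q ≠ 0 := left_div_gcd_ne_zero hp
  have hp_eq := EuclideanDomain.mul_div_cancel' hg (gcd_dvd_left p q)
  have hq_eq := EuclideanDomain.mul_div_cancel' hg (gcd_dvd_right p q)
  generalize gcd p q = g, p / gcd p q = p₁, q / gcd p q = q₁ at *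
  subst hp_eq hq_eq
  rw [wronskian_mul_mul_left, mul_eq_zero, hcop.wronskian_eq_zero_iff] at hw
  obtain ⟨hp', hq'⟩ := hw.resolve_left (pow_ne_zero 2 hg)
  rw [eq_C_of_derivative_eq_zero hp'] at hp₁ ⊢
  rw [eq_C_of_derivative_eq_zero hq']
  refine ⟨q₁.coeff 0 / p₁.coeff 0, ?_⟩
  rw [smul_eq_C_mul, ← mul_assoc, mul_comm (C _), mul_assoc, ← C_mul,
    div_mul_cancel₀ _ (C_ne_zero.mp hp₁)]

theorem exists_le_natDegree_polyPowerSum {ι : Type*} [DecidableEq ι] (S : Finset ι)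
    {α : ι → K[X]} (hα : (S : Set ι).Pairwise fun i j => ∀ c : K, α i ≠ c • α j)
    {B : ι → K[X][X]} (hB : ∀ j ∈ S, B j ≠ 0) :
    ∃ C : ℤ, ∀ᶠ n : ℕ in atTop,
      (n : ℤ) * (S.sup fun j => (α j).natDegree) - C ≤ (polyPowerSum S B α n).natDegree := by
  induction S using Finset.strongInduction generalizing B with
  | H S ih =>
  rcases S.eq_empty_or_nonempty with rfl | hS
  · exact ⟨0, by simp [polyPowerSum]⟩
  obtain ⟨j₀, hj₀, hmin⟩ := S.exists_min_image (fun j => (α j).natDegree) hS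
  rcases (S.erase j₀).eq_empty_or_nonempty with hS' | ⟨j₁, hj₁⟩
  · obtain rfl : S = {j₀} := (Finset.erase_eq_empty_iff _ _).mp hS' |>.resolve_left hS.ne_empty
    refine ⟨0, (eventually_eval_natCast_ne_zero (hB j₀ hj₀)).mono fun n hn => ?_⟩
    simp only [polyPowerSum, Finset.sum_singleton, Finset.sup_singleton, sub_zero]
    exact_mod_cast le_natDegree_mul_pow hn (α j₀) n
  have hα₀ : α j₀ ≠ 0 := by
    simpa using hα hj₀ (Finset.mem_of_mem_erase hj₁) (Finset.ne_of_mem_erase hj₁).symm 0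
  have hW : ∀ j ∈ S.erase j₀, wronskian (α j₀) (α j) ≠ 0 := fun j hj hw => by
    obtain ⟨c, hc⟩ := exists_eq_smul_of_wronskian_eq_zero hα₀ hw
    exact hα (Finset.mem_of_mem_erase hj) hj₀ (Finset.ne_of_mem_erase hj) c hc
  obtain ⟨C, hC⟩ := ih _ (Finset.erase_ssubset hj₀) (hα.mono (by simp))
    (B := fun j => taylor 1 (termWronskian (α j₀) (B j₀) (α j) (B j)))
    fun j hj => (taylor_eq_zero 1 _).not.mpr <|
      termWronskian_ne_zero (hW j hj) (hB j₀ hj₀) (hB j (Finset.mem_of_mem_erase hj))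
  refine ⟨C + ((B j₀).support.sup fun k => ((B j₀).coeff k).natDegree) + (α j₀).natDegree +
    S.sup (fun j => (α j).natDegree), ?_⟩
  rw [← map_add_atTop_eq_nat 1, eventually_map]
  refine hC.mono fun m hm => ?_
  have hK := natDegree_le_of_pow_mul_eq_wronskian hα₀ (wronskian_polyPowerSum_succ hj₀ B α m).symm
  have hb := natDegree_eval_natCast_le (B j₀) (m + 1)
  rw [Finset.sup_erase_of_le hj₀ hj₁ (hmin j₁ (Finset.mem_of_mem_erase hj₁))] at hm
  push_cast at hm hK hb ⊢
  linarith

end Field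

end Polynomial

theorem degree_lower_bound_poly_power_sum_general
    (t : ℕ)
    (α : Fin t → Polynomial ℂ)
    (hnondeg : ∀ i j : Fin t, i ≠ j → ∀ c : ℂ, α i ≠ c • α j)
    (a : Fin t → Polynomial (RatFunc ℂ)) (ha : ∀ j, a j ≠ 0)
    (G : ℕ → Polynomial ℂ)
    (hG : ∀ n : ℕ, algebraMap (Polynomial ℂ) (RatFunc ℂ) (G n) =
      ∑ j, (a j).eval ((n : RatFunc ℂ)) *
        (algebraMap (Polynomial ℂ) (RatFunc ℂ) (α j)) ^ n) :
    ∃ C : ℤ, ∃ N : ℕ, ∀ n ≥ N,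
      (n : ℤ) * (Finset.univ.sup fun j => (α j).natDegree) - C ≤ ((G n).natDegree : ℤ) := by
  obtain ⟨⟨d, hd⟩, hlift⟩ := IsLocalization.exists_map_eq_smul (nonZeroDivisors ℂ[X]) a
  choose B hB using hlift
  have hB0 : ∀ j ∈ Finset.univ, B j ≠ 0 := fun j _ hBj => ha j <|
    (smul_eq_zero.mp (by rw [← hB j, hBj, Polynomial.map_zero])).resolve_left
      (nonZeroDivisors.ne_zero hd)
  have hdG : ∀ n, d * G n = polyPowerSum Finset.univ B α n := fun n =>
    IsFractionRing.injective ℂ[X] (RatFunc ℂ) <| by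
      simp only [polyPowerSum, map_mul, map_sum, map_pow, hG, Finset.mul_sum]
      refine Finset.sum_congr rfl fun j _ => ?_
      rw [← eval₂_at_apply, ← eval_map, hB, eval_smul, map_natCast, Algebra.smul_def]
      ring
  obtain ⟨C, hC⟩ := exists_le_natDegree_polyPowerSum Finset.univ
    (fun i _ j _ hij => hnondeg i j hij) hB0
  obtain ⟨N, hN⟩ := eventually_atTop.mp hC
  refine ⟨C + d.natDegree, N, fun n hn => ?_⟩
  have hdeg : (polyPowerSum Finset.univ B α n).natDegree ≤ d.natDegree + (G n).natDegree :=
    hdG n ▸ natDegree_mul_le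
  have hlow := hN n hn
  zify at hdeg
  linarith

/-- Corollary 1: for a non-degenerate linear recurrence sequence of polynomials
`G_n = a_1(n) α_1^n + ⋯ + a_t(n) α_t^n` with polynomial characteristic roots,
there is a constant `C` such that `deg G_n ≥ n · max_j deg α_j − C` for all
sufficiently large `n`. -/
theorem degree_lower_bound_poly_power_sum
    (t : ℕ) (ht : 0 < t)
    (α : Fin t → Polynomial ℂ) (hα : ∀ j, α j ≠ 0)
    (hnondeg : ∀ i j : Fin t, i ≠ j → ∀ c : ℂ, α i ≠ c • α j)
    (a : Fin t → Polynomial (RatFunc ℂ)) (ha : ∀ j, a j ≠ 0)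
    (G : ℕ → Polynomial ℂ)
    (hG : ∀ n : ℕ, algebraMap (Polynomial ℂ) (RatFunc ℂ) (G n) =
      ∑ j, (a j).eval ((n : RatFunc ℂ)) *
        (algebraMap (Polynomial ℂ) (RatFunc ℂ) (α j)) ^ n) :
    ∃ C : ℤ, ∃ N : ℕ, ∀ n ≥ N,
      (n : ℤ) * (Finset.univ.sup fun j => (α j).natDegree) - C ≤ ((G n).natDegree : ℤ) :=
  degree_lower_bound_poly_power_sum_general t α hnondeg a ha G hG
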